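/- arXiv:2305.15489 — 2 statements merged into one kernel-verified Lean document; each statement's English description precedes it below -/
import Mathlib

section
/- Every history-deterministic nondeterministic automaton A can be pruned (by removing transitions and states) to an equivalent semantically deterministic automaton all of whose states are history deterministic. -/
open Filter

/-- A nondeterministic automaton on infinite words, with a total transition
function and an abstract acceptance condition on (word, run) pairs. -/
structure NA (A Q : Type) where
  init : Set Q
  δ : Q → A → Set Q
  acc : (ℕ → A) → (ℕ → Q) → Prop
  init_nonempty : init.Nonempty
  δ_nonempty : ∀ q a, (δ q a).Nonempty

namespace NA

variable {A Q : Type}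

def IsRun (M : NA A Q) (w : ℕ → A) (r : ℕ → Q) : Prop :=
  ∀ i, r (i + 1) ∈ M.δ (r i) (w i)

/-- The language accepted from state `q`, i.e. `L(A^q)`. -/
def Lang (M : NA A Q) (q : Q) : Set (ℕ → A) :=
  {w | ∃ r, r 0 = q ∧ M.IsRun w r ∧ M.acc w r}

/-- The language of the automaton. -/
def LangOf (M : NA A Q) : Set (ℕ → A) :=
  {w | ∃ q ∈ M.init, w ∈ M.Lang q}

def ShiftInvariant (M : NA A Q) : Prop :=
  ∀ w r, M.acc w r ↔ M.acc (fun i => w (i + 1)) (fun i => r (i + 1))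

/-- Extension of the transition function to sets of states and finite words. -/
def extSet (δ : Q → A → Set Q) : Set Q → List A → Set Q
  | S, [] => S
  | S, a :: u => extSet δ (⋃ q ∈ S, δ q a) u

def Reachable (M : NA A Q) (q : Q) : Prop :=
  ∃ u : List A, q ∈ extSet M.δ M.init u

/-- The prefix of length `n` of an infinite word. -/
def wordPrefix (w : ℕ → A) (n : ℕ) : List A := List.ofFn fun k : Fin n => w k

/-- The automaton with initial state `q` is history deterministic: there is a
strategy `f : Σ* → Q`, consistent with the transition function, whose induced
run on every word of `L(A^q)` is accepting. -/
def HDFrom (M : NA A Q) (q : Q) : Prop :=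
  ∃ f : List A → Q, f [] = q ∧ (∀ u a, f (u ++ [a]) ∈ M.δ (f u) a) ∧
    ∀ w ∈ M.Lang q, M.acc w (fun i => f (wordPrefix w i))

/-- History determinism of the automaton. -/
def HD (M : NA A Q) : Prop :=
  ∃ f : List A → Q, f [] ∈ M.init ∧ (∀ u a, f (u ++ [a]) ∈ M.δ (f u) a) ∧
    ∀ w ∈ M.LangOf, M.acc w (fun i => f (wordPrefix w i))

end NA

namespace NA

variable {A Q : Type}

def cat (v : List A) (w : ℕ → A) : ℕ → A := fun i =>
  if h : i < v.length then v.get ⟨i, h⟩ else w (i - v.length)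

lemma cat_add (v : List A) (w : ℕ → A) (i : ℕ) : cat v w (v.length + i) = w i := by
  simp [cat]

lemma cat_nil (w : ℕ → A) : cat [] w = w := by
  funext i; simp [cat]

lemma wordPrefix_zero (w : ℕ → A) : wordPrefix w 0 = [] := rfl

lemma wordPrefix_succ (w : ℕ → A) (n : ℕ) :
    wordPrefix w (n + 1) = wordPrefix w n ++ [w n] := by
  rw [wordPrefix, List.ofFn_succ', List.concat_eq_append]
  simp only [Fin.coe_castSucc, Fin.val_last]
  rfl

lemma wordPrefix_cat (v : List A) (w : ℕ → A) :
    ∀ i, wordPrefix (cat v w) (v.length + i) = v ++ wordPrefix w i := by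
  intro i; induction i with
  | zero =>
    have h1 : (fun k : Fin v.length => cat v w ↑k) = v.get := by
      funext k; simp [cat, k.isLt]
    simp [wordPrefix, h1]
  | succ n ih =>
    have h2 : v.length + (n + 1) = (v.length + n) + 1 := rfl
    rw [h2, wordPrefix_succ, ih, cat_add, wordPrefix_succ, List.append_assoc]

lemma cat_append (u : List A) (a : A) (w : ℕ → A) :
    cat (u ++ [a]) w = cat u (cat [a] w) := by
  funext i
  simp only [cat, List.length_append, List.length_singleton]
  rcases lt_trichotomy i u.length with h | h | h
  · rw [dif_pos (by omega), dif_pos h]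
    exact List.getElem_append_left h
  · subst h
    rw [dif_pos (by omega), dif_neg (lt_irrefl _)]
    simp
  · rw [dif_neg (by omega), dif_neg (by omega), dif_neg (by omega : ¬ i - u.length < 1)]
    congr 1

lemma acc_shift (M : NA A Q) (hSI : M.ShiftInvariant) (n : ℕ) (w : ℕ → A) (r : ℕ → Q) :
    M.acc w r ↔ M.acc (fun i => w (i + n)) (fun i => r (i + n)) := by
  induction n with
  | zero => simp
  | succ n ih =>
    constructor
    · intro h
      have h2 := (hSI _ _).mp (ih.mp h)
      convert h2 using 2 <;> (congr 1; omega)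
    · intro h
      refine ih.mpr ((hSI _ _).mpr ?_)
      convert h using 2 <;> (congr 1; omega)

section Strategy

variable (M : NA A Q) (hSI : M.ShiftInvariant) (f : List A → Q)
  (hf0 : f [] ∈ M.init)
  (hstep : ∀ u a, f (u ++ [a]) ∈ M.δ (f u) a)
  (hwin : ∀ w ∈ M.LangOf, M.acc w (fun i => f (wordPrefix w i)))

include hSI hwin in
lemma acc_f_of_cat (v : List A) (w : ℕ → A) (hmem : cat v w ∈ M.LangOf) :
    M.acc w (fun i => f (v ++ wordPrefix w i)) := by
  have h := hwin (cat v w) hmem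
  rw [acc_shift M hSI v.length] at h
  convert h using 2
  · rw [Nat.add_comm, cat_add]
  · rw [Nat.add_comm, wordPrefix_cat]

include hSI hf0 hstep hwin in
lemma lang_f_iff (v : List A) (w : ℕ → A) :
    w ∈ M.Lang (f v) ↔ cat v w ∈ M.LangOf := by
  constructor
  · rintro ⟨r, hr0, hrun, hacc⟩
    set r' : ℕ → Q := fun i =>
      if h : i < v.length then f (wordPrefix (cat v w) i) else r (i - v.length) with hr'def
    have hr' : ∀ i, i ≤ v.length → r' i = f (wordPrefix (cat v w) i) := by
      intro i hi
      by_cases h : i < v.length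
      · simp [hr'def, h]
      · have hiv : i = v.length := by omega
        subst hiv
        have : wordPrefix (cat v w) v.length = v := by
          have := wordPrefix_cat v w 0
          simpa [wordPrefix_zero] using this
        simp [hr'def, this, hr0]
    have hrshift : ∀ i, r' (v.length + i) = r i := by
      intro i
      rcases Nat.eq_zero_or_pos i with rfl | hi
      · simpa [hr0] using (hr' v.length le_rfl).trans (by
          have := wordPrefix_cat v w 0
          simp [wordPrefix_zero] at this
          rw [this])
      · have h : ¬ v.length + i < v.length := by omega
        simp [hr'def, h]
    refine ⟨f [], hf0, r', ?_, ?_, ?_⟩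
    · rcases Nat.eq_zero_or_pos v.length with h0 | h0
      · have hv : v = [] := List.length_eq_zero_iff.mp h0
        subst hv
        simpa [hr0] using hrshift 0
      · rw [hr' 0 (by omega), wordPrefix_zero]
    · intro i
      rcases Nat.lt_or_ge i v.length with h | h
      · rw [hr' i (le_of_lt h), hr' (i + 1) h, wordPrefix_succ]
        exact hstep _ _
      · obtain ⟨j, rfl⟩ := Nat.exists_eq_add_of_le h
        have e1 : r' (v.length + j) = r j := hrshift j
        have e2 : r' (v.length + j + 1) = r (j + 1) := hrshift (j + 1)
        rw [e1, e2, cat_add]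
        exact hrun j
    · rw [acc_shift M hSI v.length]
      convert hacc using 2
      · rw [Nat.add_comm, cat_add]
      · rw [Nat.add_comm, hrshift]
  · intro hmem
    refine ⟨fun i => f (v ++ wordPrefix w i), by simp [wordPrefix_zero], ?_, ?_⟩
    · intro i
      show f (v ++ wordPrefix w (i + 1)) ∈ M.δ (f (v ++ wordPrefix w i)) (w i)
      have e : v ++ wordPrefix w (i + 1) = (v ++ wordPrefix w i) ++ [w i] := by
        rw [wordPrefix_succ, List.append_assoc]
      rw [e]
      exact hstep _ _
    · exact acc_f_of_cat M hSI f hwin v w hmem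

end Strategy

end NA

/-- Every history-deterministic automaton can be pruned (removing initial
states and transitions; removed states become unreachable) to an equivalent
semantically deterministic automaton all of whose (remaining, i.e. reachable)
states are history deterministic. -/
theorem hd_pruned_to_sd {A Q : Type} (M : NA A Q)
    (hSI : M.ShiftInvariant) (hHD : M.HD) :
    ∃ B : NA A Q,
      B.acc = M.acc ∧
      B.init ⊆ M.init ∧
      (∀ q a, B.δ q a ⊆ M.δ q a) ∧
      B.LangOf = M.LangOf ∧
      (∀ q₁ ∈ B.init, ∀ q₂ ∈ B.init, B.Lang q₁ = B.Lang q₂) ∧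
      (∀ q, B.Reachable q →
        (∀ a, ∀ q₁ ∈ B.δ q a, ∀ q₂ ∈ B.δ q a, B.Lang q₁ = B.Lang q₂) ∧ B.HDFrom q) := by
  classical
  obtain ⟨f, hf0, hstep, hwin⟩ := hHD
  set B : NA A Q :=
    { init := {f []}
      δ := fun q a => {q' | (∃ u, f u = q ∧ f (u ++ [a]) = q') ∨
            (¬ (∃ u, f u = q) ∧ q' ∈ M.δ q a)}
      acc := M.acc
      init_nonempty := ⟨f [], rfl⟩
      δ_nonempty := by
        intro q a
        by_cases h : ∃ u, f u = q
        · obtain ⟨u, rfl⟩ := h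
          exact ⟨f (u ++ [a]), Or.inl ⟨u, rfl, rfl⟩⟩
        · obtain ⟨p, hp⟩ := M.δ_nonempty q a
          exact ⟨p, Or.inr ⟨h, hp⟩⟩ } with hBdef
  have hδsub : ∀ q a, B.δ q a ⊆ M.δ q a := by
    rintro q a q' (⟨u, rfl, rfl⟩ | ⟨-, h⟩)
    · exact hstep u a
    · exact h
  -- runs of B are runs of M
  have hLangsub : ∀ q, B.Lang q ⊆ M.Lang q := by
    rintro q w ⟨r, hr0, hrun, hacc⟩
    exact ⟨r, hr0, fun i => hδsub _ _ (hrun i), hacc⟩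
  -- the f-strategy run (continued from v) is a B-run
  have hfrunB : ∀ (v : List A) (w : ℕ → A),
      B.IsRun w (fun i => f (v ++ NA.wordPrefix w i)) := by
    intro v w i
    show f (v ++ NA.wordPrefix w (i + 1)) ∈ B.δ (f (v ++ NA.wordPrefix w i)) (w i)
    refine Or.inl ⟨v ++ NA.wordPrefix w i, rfl, ?_⟩
    rw [NA.wordPrefix_succ, List.append_assoc]
  have hlangf : ∀ (v : List A) (w : ℕ → A),
      w ∈ M.Lang (f v) ↔ NA.cat v w ∈ M.LangOf :=
    NA.lang_f_iff M hSI f hf0 hstep hwin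
  -- B and M agree on languages of f-states
  have hBlang : ∀ v : List A, B.Lang (f v) = M.Lang (f v) := by
    intro v
    apply Set.Subset.antisymm (hLangsub _)
    intro w hw
    refine ⟨fun i => f (v ++ NA.wordPrefix w i), by simp [NA.wordPrefix_zero], hfrunB v w, ?_⟩
    exact NA.acc_f_of_cat M hSI f hwin v w ((hlangf v w).mp hw)
  -- languages of B from f-states, in residual form
  have hBres : ∀ (v : List A) (w : ℕ → A),
      w ∈ B.Lang (f v) ↔ NA.cat v w ∈ M.LangOf := by
    intro v w; rw [hBlang v]; exact hlangf v w
  -- reachable states of B are f-states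
  have hreach : ∀ q, B.Reachable q → ∃ v, f v = q := by
    rintro q ⟨u, hu⟩
    have key : ∀ (u : List A) (S : Set Q), (∀ p ∈ S, ∃ v, f v = p) →
        ∀ p ∈ NA.extSet B.δ S u, ∃ v, f v = p := by
      intro u
      induction u with
      | nil => intro S hS p hp; exact hS p hp
      | cons a u ih =>
        intro S hS p hp
        refine ih _ ?_ p hp
        rintro p' hp'
        simp only [Set.mem_iUnion] at hp'
        obtain ⟨q', hq', hmem⟩ := hp'
        obtain ⟨v, rfl⟩ := hS q' hq'
        rcases hmem with ⟨u', hu', rfl⟩ | ⟨hno, -⟩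
        · exact ⟨u' ++ [a], rfl⟩
        · exact absurd ⟨v, rfl⟩ hno
    exact key u B.init (by rintro p rfl; exact ⟨[], rfl⟩) q hu
  refine ⟨B, rfl, ?_, hδsub, ?_, ?_, ?_⟩
  · rintro p rfl; exact hf0
  · -- LangOf equality
    ext w
    constructor
    · rintro ⟨q, rfl, hw⟩
      have := (hBres [] w).mp hw
      rwa [NA.cat_nil] at this
    · intro hw
      refine ⟨f [], rfl, (hBres [] w).mpr ?_⟩
      rwa [NA.cat_nil]
  · intro q₁ hq₁ q₂ hq₂
    have h1 : q₁ = f [] := hq₁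
    have h2 : q₂ = f [] := hq₂
    rw [h1, h2]
  · rintro q hq
    obtain ⟨v, rfl⟩ := hreach q hq
    constructor
    · -- semantic determinism at reachable states
      rintro a q₁ hq₁ q₂ hq₂
      have get1 : ∀ q' ∈ B.δ (f v) a, ∃ u, f u = f v ∧ f (u ++ [a]) = q' := by
        rintro q' (h | ⟨hno, -⟩)
        · exact h
        · exact absurd ⟨v, rfl⟩ hno
      obtain ⟨u₁, hu₁, rfl⟩ := get1 q₁ hq₁
      obtain ⟨u₂, hu₂, rfl⟩ := get1 q₂ hq₂
      ext w
      have e1 : ∀ u : List A, f u = f v →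
          (w ∈ B.Lang (f (u ++ [a])) ↔ NA.cat [a] w ∈ M.Lang (f v)) := by
        intro u hu
        rw [hBres (u ++ [a]) w, NA.cat_append, ← hlangf u (NA.cat [a] w), hu]
      rw [e1 u₁ hu₁, e1 u₂ hu₂]
    · -- HD from f v
      refine ⟨fun u => f (v ++ u), by simp, ?_, ?_⟩
      · intro u a
        refine Or.inl ⟨v ++ u, rfl, ?_⟩
        rw [List.append_assoc]
      · intro w hw
        exact NA.acc_f_of_cat M hSI f hwin v w ((hBres v w).mp hw)
end

section
/- Let Σ = {0,1} and for n ≥ 1 let R_n be the set of words of length n+1 over Σ whose first and last letters differ. Then the complement of ∞R_n in Σ^ω equals the set of words w such that there exists u ∈ Σⁿ with w ∈ Σ*·u^ω. -/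
variable {A : Type}

/-- The infix `w[i..i+len-1]` of an infinite word. -/
def seg (w : ℕ → A) (i len : ℕ) : List A := List.ofFn fun k : Fin len => w (i + k)

/-- `∞R`: the words containing infinitely many disjoint infixes in `R`. -/
def InfInfix (R : Set (List A)) : Set (ℕ → A) :=
  {w | ∀ N, ∃ i len, N ≤ i ∧ seg w i len ∈ R}

/-- `R_n = 0·(0+1)^{n-1}·1 + 1·(0+1)^{n-1}·0`: the words of length `n+1`
whose first and last letters differ. -/
def Rn (n : ℕ) : Set (List Bool) :=
  {u | ∃ (a b : Bool) (v : List Bool), a ≠ b ∧ v.length = n - 1 ∧ u = a :: v ++ [b]}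

lemma seg_decomp (w : ℕ → Bool) (i n : ℕ) (hn : 1 ≤ n) :
    seg w i (n + 1) = w i :: (seg w (i + 1) (n - 1) ++ [w (i + n)]) := by
  obtain ⟨m, rfl⟩ : ∃ m, n = m + 1 := ⟨n - 1, by omega⟩
  simp only [Nat.add_sub_cancel, seg]
  rw [List.ofFn_succ, List.ofFn_succ']
  simp only [List.concat_eq_append, Function.comp]
  congr 1
  congr 1
  refine List.ext_getElem (by simp) ?_
  intro j h1 h2
  simp only [List.getElem_ofFn]
  congr 1
  simp [Fin.cast]
  omega

lemma mem_Rn_iff (w : ℕ → Bool) (i len n : ℕ) (hn : 1 ≤ n) :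
    seg w i len ∈ Rn n ↔ len = n + 1 ∧ w i ≠ w (i + n) := by
  constructor
  · rintro ⟨a, b, v, hab, hv, he⟩
    have hlen : len = n + 1 := by
      have := congrArg List.length he
      simp [seg] at this
      omega
    subst hlen
    rw [seg_decomp w i n hn] at he
    have h1 : w i = a := (List.cons.injEq _ _ _ _ ▸ he).1
    have h2 : seg w (i + 1) (n - 1) ++ [w (i + n)] = v ++ [b] :=
      (List.cons.injEq _ _ _ _ ▸ he).2
    have hl : (seg w (i + 1) (n - 1)).length = v.length := by simp [seg, hv]
    have h3 := (List.append_inj h2 hl).2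
    refine ⟨rfl, ?_⟩
    simp at h3
    rw [h1, h3]
    exact hab
  · rintro ⟨rfl, hne⟩
    exact ⟨w i, w (i + n), seg w (i + 1) (n - 1), hne, by simp [seg],
      seg_decomp w i n hn⟩

/-- The complement of `∞R_n` consists exactly of the words of the form
`Σ* · u^ω` for some `u ∈ Σⁿ`. -/
theorem compl_infinfix_eventually_periodic (n : ℕ) (hn : 1 ≤ n) :
    {w : ℕ → Bool | w ∉ InfInfix (Rn n)} =
      {w | ∃ (u : Fin n → Bool) (m : ℕ),
        ∀ i : ℕ, w (m + i) = u ⟨i % n, Nat.mod_lt i hn⟩} := by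
  ext w
  simp only [Set.mem_setOf_eq, InfInfix]
  constructor
  · intro hw
    push_neg at hw
    obtain ⟨N, hN⟩ := hw
    have hper : ∀ i, N ≤ i → w i = w (i + n) := by
      intro i hi
      by_contra hne
      exact (hN i (n + 1) hi) ((mem_Rn_iff w i (n + 1) n hn).mpr ⟨rfl, hne⟩)
    refine ⟨fun k => w (N + k), N, fun i => ?_⟩
    induction i using Nat.strong_induction_on with
    | _ i ih =>
      rcases lt_or_ge i n with h | h
      · simp [Nat.mod_eq_of_lt h]
      · have hj : i - n < i := by omega
        have := ih (i - n) hj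
        have heq : w (N + (i - n)) = w (N + i) := by
          have := hper (N + (i - n)) (by omega)
          rw [this]
          congr 1
          omega
        rw [← heq, this]
        congr 2
        conv_rhs => rw [show i = (i - n) + n by omega]
        rw [Nat.add_mod_right]
  · rintro ⟨u, m, hu⟩ hw
    obtain ⟨i, len, hi, hseg⟩ := hw m
    obtain ⟨rfl, hne⟩ := (mem_Rn_iff w i len n hn).mp hseg
    apply hne
    have h1 := hu (i - m)
    have h2 := hu (i - m + n)
    rw [show m + (i - m) = i by omega] at h1
    rw [show m + (i - m + n) = i + n by omega] at h2
    rw [h1, h2]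
    congr 1
    simp [Nat.add_mod_right]
end
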